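/- For every s ∈ (1, 5/3]: s² K̃_{1,2}''(s) + s K̃_{1,2}'(s) > 0. Equivalently, the function W(x) = K̃_{1,2}(e^x) satisfies W''(x) > 0 for all x ∈ (0, log(5/3)]. -/

import Mathlib

/-!
Write `K̃(s) = s^(-3/2) G(s)` with `G(s) = (s³ + 1) log((s+1)/(s-1)) - 2s(s² + s + 1)/(s + 1)`.
For the Euler operator `θ = s d/ds` one has `s² K̃'' + s K̃' = θ²K̃` and
`θ²(s^a G) = s^a (a² G + (2a+1) s G' + s² G'')`. For `a = -3/2` the logarithm enters
`9/4 G - 2s G' + s² G''` only through `9/4 (s³ + 1) log((s+1)/(s-1))`, so the bound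
`log((s+1)/(s-1)) ≥ 2/(s+1)` leaves a sextic in `s`, positive on `[1, 5/3]`.
Since `d/dx f(eˣ) = (θf)(eˣ)`, the claim about `W` is the first claim at `s = eˣ`.
-/

open Real Set

/-- The kernel `K̃_{1,2}(s)` (simplified form, valid for `s > 1`). -/
noncomputable def Ktilde12 (s : ℝ) : ℝ :=
  (s ^ ((3 : ℝ) / 2) + s ^ (-(3 : ℝ) / 2)) * Real.log ((s + 1) / (s - 1))
    - 2 * s ^ (-(1 : ℝ) / 2) * (s ^ 2 + s + 1) / (s + 1)

open Filter Topology

theorem sq_mul_deriv_deriv_add_mul_deriv_of_eventuallyEq_rpow_mul {f g g' : ℝ → ℝ}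
    {a s g'' : ℝ} (hs : 0 < s) (hf : f =ᶠ[𝓝 s] fun y => y ^ a * g y)
    (hg : ∀ᶠ y in 𝓝 s, HasDerivAt g (g' y) y) (hg' : HasDerivAt g' g'' s) :
    s ^ 2 * deriv (deriv f) s + s * deriv f s
      = s ^ a * (a ^ 2 * g s + (2 * a + 1) * s * g' s + s ^ 2 * g'') := by
  have hf' : ∀ᶠ y in 𝓝 s, HasDerivAt f (a * y ^ (a - 1) * g y + y ^ a * g' y) y := by
    filter_upwards [hf.eventuallyEq_nhds, hg, lt_mem_nhds hs] with y hfy hgy hy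
    exact ((hasDerivAt_rpow_const (Or.inl hy.ne')).fun_mul hgy).congr_of_eventuallyEq hfy
  have hf'' : HasDerivAt (fun y => a * y ^ (a - 1) * g y + y ^ a * g' y)
      (a * ((a - 1) * s ^ (a - 1 - 1)) * g s + a * s ^ (a - 1) * g' s
        + (a * s ^ (a - 1) * g' s + s ^ a * g'')) s :=
    (((hasDerivAt_rpow_const (Or.inl hs.ne')).const_mul a).fun_mul hg.self_of_nhds).fun_add
      ((hasDerivAt_rpow_const (Or.inl hs.ne')).fun_mul hg')
  have hderiv : deriv f =ᶠ[𝓝 s] fun y => a * y ^ (a - 1) * g y + y ^ a * g' y :=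
    hf'.mono fun y hy => hy.deriv
  rw [hderiv.deriv_eq, hf''.deriv, hf'.self_of_nhds.deriv, rpow_sub_one hs.ne',
    rpow_sub_one hs.ne']
  field_simp
  ring

theorem two_div_add_one_le_log_div {s : ℝ} (hs : 1 < s) :
    2 / (s + 1) ≤ log ((s + 1) / (s - 1)) := by
  have h := one_sub_inv_le_log_of_pos (x := (s + 1) / (s - 1)) (by apply div_pos <;> linarith)
  have h1 : s - 1 ≠ 0 := by linarith
  convert h using 1
  field_simp
  ring

theorem hasDerivAt_log_add_one_div_sub_one {s : ℝ} (hs : 1 < s) :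
    HasDerivAt (fun y => log ((y + 1) / (y - 1))) (-2 / (s ^ 2 - 1)) s := by
  have h1 : s - 1 ≠ 0 := by linarith
  refine ((((hasDerivAt_id' s).add_const 1).fun_div ((hasDerivAt_id' s).sub_const 1) h1).log
    (div_ne_zero (by linarith) h1)).congr_deriv ?_
  have h2 : s ^ 2 - 1 ≠ 0 := by nlinarith
  field_simp
  ring

theorem deriv_deriv_comp_exp {f : ℝ → ℝ} {x : ℝ} (hf : ContDiffAt ℝ 2 f (exp x)) :
    deriv (deriv fun t => f (exp t)) x
      = exp x ^ 2 * deriv (deriv f) (exp x) + exp x * deriv f (exp x) := by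
  have hdiff : ∀ᶠ t in 𝓝 x, DifferentiableAt ℝ f (exp t) :=
    continuous_exp.continuousAt.eventually <|
      (hf.eventually (by simp)).mono fun y hy => hy.differentiableAt (by norm_num)
  have hderiv : deriv (fun t => f (exp t)) =ᶠ[𝓝 x] fun t => deriv f (exp t) * exp t :=
    hdiff.mono fun t ht => (ht.hasDerivAt.comp t (hasDerivAt_exp t)).deriv
  have hf' : DifferentiableAt ℝ (deriv f) (exp x) :=
    (hf.derivWithin (m := 1) (by norm_num)).differentiableAt one_ne_zero
  have h : HasDerivAt (fun t => deriv f (exp t) * exp t)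
      (deriv (deriv f) (exp x) * exp x * exp x + deriv f (exp x) * exp x) x :=
    (hf'.hasDerivAt.comp x (hasDerivAt_exp x)).mul (hasDerivAt_exp x)
  rw [hderiv.deriv_eq, h.deriv]
  ring

theorem contDiffAt_Ktilde12 {s : ℝ} (hs : 1 < s) : ContDiffAt ℝ 2 Ktilde12 s := by
  have h0 : s ≠ 0 := by positivity
  have h1 : s - 1 ≠ 0 := by linarith
  unfold Ktilde12
  fun_prop (disch := first | assumption | positivity | (left; assumption))

noncomputable def reducedKernel (s : ℝ) : ℝ :=
  (s ^ 3 + 1) * log ((s + 1) / (s - 1)) - 2 * s * (s ^ 2 + s + 1) / (s + 1)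

noncomputable def reducedKernelDeriv (s : ℝ) : ℝ :=
  3 * s ^ 2 * log ((s + 1) / (s - 1)) - 2 * (s ^ 2 - s + 1) / (s - 1)
    - 2 * (2 * s ^ 3 + 4 * s ^ 2 + 2 * s + 1) / (s + 1) ^ 2

noncomputable def reducedKernelDeriv2 (s : ℝ) : ℝ :=
  6 * s * log ((s + 1) / (s - 1)) - 6 * s ^ 2 / (s ^ 2 - 1) - 2 * (s ^ 2 - 2 * s) / (s - 1) ^ 2
    - 4 * (s ^ 3 + 3 * s ^ 2 + 3 * s) / (s + 1) ^ 3

theorem Ktilde12_eq_rpow_mul_reducedKernel {s : ℝ} (hs : 0 < s) :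
    Ktilde12 s = s ^ (-(3 : ℝ) / 2) * reducedKernel s := by
  have h32 : s ^ ((3 : ℝ) / 2) = s ^ (-(3 : ℝ) / 2) * s ^ 3 := by
    rw [← rpow_natCast, ← rpow_add hs]; norm_num
  have h12 : s ^ (-(1 : ℝ) / 2) = s ^ (-(3 : ℝ) / 2) * s := by
    rw [← rpow_add_one hs.ne']; norm_num
  rw [Ktilde12, reducedKernel, h32, h12]
  ring

theorem hasDerivAt_reducedKernel {s : ℝ} (hs : 1 < s) :
    HasDerivAt reducedKernel (reducedKernelDeriv s) s := by
  have h1 : s - 1 ≠ 0 := by linarith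
  have h2 : s + 1 ≠ 0 := by linarith
  have h3 : s ^ 2 - 1 ≠ 0 := by nlinarith
  refine ((((hasDerivAt_pow 3 s).add_const 1).fun_mul
    (hasDerivAt_log_add_one_div_sub_one hs)).fun_sub
    ((((hasDerivAt_id' s).const_mul 2).fun_mul
      (((hasDerivAt_pow 2 s).fun_add (hasDerivAt_id' s)).add_const 1)).fun_div
      ((hasDerivAt_id' s).add_const 1) h2)).congr_deriv ?_
  rw [reducedKernelDeriv]
  field_simp
  ring

theorem hasDerivAt_reducedKernelDeriv {s : ℝ} (hs : 1 < s) :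
    HasDerivAt reducedKernelDeriv (reducedKernelDeriv2 s) s := by
  have h1 : s - 1 ≠ 0 := by linarith
  have h2 : s + 1 ≠ 0 := by linarith
  have h3 : s ^ 2 - 1 ≠ 0 := by nlinarith
  have hcubic := ((((hasDerivAt_pow 3 s).const_mul 2).fun_add
    ((hasDerivAt_pow 2 s).const_mul 4)).fun_add ((hasDerivAt_id' s).const_mul 2)).add_const 1
  refine ((((hasDerivAt_pow 2 s).const_mul 3).fun_mul
    (hasDerivAt_log_add_one_div_sub_one hs)).fun_sub
    (((((hasDerivAt_pow 2 s).fun_sub (hasDerivAt_id' s)).add_const 1).const_mul 2).fun_div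
      ((hasDerivAt_id' s).sub_const 1) h1)).fun_sub
    ((hcubic.const_mul 2).fun_div (((hasDerivAt_id' s).add_const 1).fun_pow 2)
      (pow_ne_zero 2 h2)) |>.congr_deriv ?_
  rw [reducedKernelDeriv2]
  field_simp
  ring

theorem euler_reducedKernel_pos {s : ℝ} (hs1 : 1 < s) (hs2 : s ≤ 5 / 3) :
    0 < 9 / 4 * reducedKernel s - 2 * s * reducedKernelDeriv s + s ^ 2 * reducedKernelDeriv2 s := by
  have h1 : 0 < s - 1 := by linarith
  have h3 : s ^ 2 - 1 ≠ 0 := by nlinarith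
  have hdecomp : 9 / 4 * reducedKernel s - 2 * s * reducedKernelDeriv s
        + s ^ 2 * reducedKernelDeriv2 s
      = 9 / 4 * (s ^ 3 + 1) * (log ((s + 1) / (s - 1)) - 2 / (s + 1))
        + (9 - 9 * s - 27 * s ^ 2 + 18 * s ^ 3 + 59 * s ^ 4 - 9 * s ^ 5 - 9 * s ^ 6)
          / (2 * (s - 1) ^ 2 * (s + 1) ^ 3) := by
    rw [reducedKernel, reducedKernelDeriv, reducedKernelDeriv2]
    field_simp
    ring
  have hlog : 0 ≤ log ((s + 1) / (s - 1)) - 2 / (s + 1) :=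
    sub_nonneg.2 (two_div_add_one_le_log_div hs1)
  -- `s⁵ ≤ 5/3 s⁴` and `s⁶ ≤ 25/9 s⁴` leave `9 - 9s - 27s² + 18s³ + 19s⁴ ≥ 10s² - 9s + 9 > 0`.
  have hpoly : 0 < 9 - 9 * s - 27 * s ^ 2 + 18 * s ^ 3 + 59 * s ^ 4 - 9 * s ^ 5 - 9 * s ^ 6 := by
    nlinarith [mul_nonneg (pow_nonneg (by linarith : (0:ℝ) ≤ s) 4) (sub_nonneg.2 hs2),
      mul_nonneg (pow_nonneg (by linarith : (0:ℝ) ≤ s) 4) (by nlinarith : (0:ℝ) ≤ 25 / 9 - s ^ 2),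
      mul_nonneg (sq_nonneg s) h1.le]
  rw [hdecomp]
  exact add_pos_of_nonneg_of_pos (mul_nonneg (by positivity) hlog) (div_pos hpoly (by positivity))

/-- Condition (4.18) of Lemma 4.2 with `x₀ = log(5/3)` (Appendix A.5.1):
`s² K̃_{1,2}''(s) + s K̃_{1,2}'(s) > 0` on `(1, 5/3]`; equivalently
`W(x) = K̃_{1,2}(e^x)` satisfies `W''(x) > 0` on `(0, log(5/3)]`. -/
theorem Ktilde12_convexity_near_one :
    (∀ s ∈ Ioc (1 : ℝ) (5 / 3),
      0 < s ^ 2 * deriv (deriv Ktilde12) s + s * deriv Ktilde12 s) ∧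
    (∀ x ∈ Ioc (0 : ℝ) (Real.log (5 / 3)),
      0 < deriv (deriv (fun t => Ktilde12 (Real.exp t))) x) := by
  have euler_pos : ∀ s ∈ Ioc (1 : ℝ) (5 / 3),
      0 < s ^ 2 * deriv (deriv Ktilde12) s + s * deriv Ktilde12 s := by
    rintro s ⟨hs1, hs2⟩
    have hs : 0 < s := by linarith
    have hK : Ktilde12 =ᶠ[𝓝 s] fun y => y ^ (-(3 : ℝ) / 2) * reducedKernel y :=
      (lt_mem_nhds hs).mono fun y hy => Ktilde12_eq_rpow_mul_reducedKernel hy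
    rw [sq_mul_deriv_deriv_add_mul_deriv_of_eventuallyEq_rpow_mul hs hK
      ((lt_mem_nhds hs1).mono fun y hy => hasDerivAt_reducedKernel hy)
      (hasDerivAt_reducedKernelDeriv hs1)]
    exact mul_pos (rpow_pos_of_pos hs _) ((euler_reducedKernel_pos hs1 hs2).trans_eq (by ring))
  refine ⟨euler_pos, ?_⟩
  rintro x ⟨hx0, hx⟩
  have hs1 : 1 < exp x := one_lt_exp_iff.2 hx0
  have hs2 : exp x ≤ 5 / 3 := by rwa [← exp_le_exp, exp_log (by norm_num)] at hx
  rw [deriv_deriv_comp_exp (contDiffAt_Ktilde12 hs1)]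
  exact euler_pos _ ⟨hs1, hs2⟩
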